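/- Let R = ℂ[t^α | 0 < α ∈ ℝ] and let M = R/tR be the quotient of R by the ideal tR = {t·r : r ∈ R} (M has basis t^α for α ∈ (0,1]). Then M is a smooth R-module: the canonical map R ⊗_R M → M is an isomorphism. -/

import Mathlib

open TensorProduct LinearMap

/-- The additive semigroup of positive real exponents. -/
abbrev PosReal := {x : ℝ // 0 < x}

/-- `R = ℂ[t^α | 0 < α ∈ ℝ]`. -/
abbrev Rpos := AddMonoidAlgebra ℂ PosReal

/-- The element `t = t^1`. -/
noncomputable def tElt : Rpos := AddMonoidAlgebra.single ⟨1, one_pos⟩ 1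

/-- The ideal `tR = {t·r : r ∈ R}` (as a ℂ-subspace, it is spanned by the products). -/
noncomputable def tIdeal : Submodule ℂ Rpos :=
  Submodule.span ℂ (Set.range fun r : Rpos => tElt * r)

/-- `M = R/tR`. -/
noncomputable abbrev Mqt := Rpos ⧸ tIdeal

/-- The bar differential `R ⊗ R ⊗ M → R ⊗ M` for a module structure given by a
bilinear action map `act`. -/
noncomputable def barDM (act : Rpos →ₗ[ℂ] Mqt →ₗ[ℂ] Mqt) :
    (Rpos ⊗[ℂ] (Rpos ⊗[ℂ] Mqt)) →ₗ[ℂ] Rpos ⊗[ℂ] Mqt :=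
  (rTensor Mqt (mul' ℂ Rpos)) ∘ₗ (TensorProduct.assoc ℂ Rpos Rpos Mqt).symm.toLinearMap
    - lTensor Rpos (TensorProduct.lift act)

/-! Every exponent splits as `α = ε + γ` with `ε` arbitrarily small, so the bar relations
`rs ⊗ m ∼ r ⊗ sm` reduce every element of `R ⊗ M` to a single tensor `t^ε ⊗ m`. If `t^ε m = 0`
in `M = R/tR`, then `m` only involves monomials `t^α` with `ε + α > 1`, and for such a monomial
any `δ < ε` with `δ + α > 1` gives `t^ε ⊗ t^α ∼ t^(ε-δ) ⊗ t^(δ+α) = 0`. Hence the kernel of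
`R ⊗ M → M` is the image of the bar differential; surjectivity holds because `t^α = t^ε t^(α-ε)`. -/

open Function AddMonoidAlgebra

theorem Submodule.bijective_of_comp_mkQ_eq {K V W : Type*} [Ring K] [AddCommGroup V] [Module K V]
    [AddCommGroup W] [Module K W] {p : Submodule K V} {g : V →ₗ[K] W} {f : (V ⧸ p) →ₗ[K] W}
    (hf : f ∘ₗ p.mkQ = g) (hker : ker g = p) (hg : Surjective g) : Bijective f := by
  have hf_eq : f = p.liftQ g hker.ge := p.linearMap_qext (by rw [hf, liftQ_mkQ])
  refine ⟨?_, ?_⟩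
  · rw [← ker_eq_bot, hf_eq]
    exact ker_liftQ_eq_bot' p g hker.symm
  · rw [← hf, coe_comp] at hg
    exact hg.of_comp

instance : NoMinOrder PosReal := inferInstanceAs (NoMinOrder (Set.Ioi (0 : ℝ)))

theorem PosReal.exists_add_eq_of_lt {ε α : PosReal} (h : ε < α) : ∃ γ : PosReal, ε + γ = α :=
  ⟨⟨α - ε, sub_pos.2 h⟩, Subtype.ext (add_sub_cancel _ _)⟩

namespace Rpos

theorem coeff_single_mul_add (α β : PosReal) (c : ℂ) (y : Rpos) :
    (single α c * y).coeff (α + β) = c * y.coeff β :=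
  coeff_single_mul_eq_mul_coeff β fun _ _ => add_right_inj α

theorem coeff_single_mul_of_le {α β : PosReal} (h : β ≤ α) (c : ℂ) (y : Rpos) :
    (single α c * y).coeff β = 0 :=
  coeff_single_mul_of_forall_add_ne _ _ fun γ hγ => (hγ ▸ h).not_gt (lt_add_of_pos_right _ γ.2)

end Rpos

theorem coeff_eq_zero_of_mem_tIdeal {y : Rpos} (hy : y ∈ tIdeal) {β : PosReal}
    (hβ : (β : ℝ) ≤ 1) : y.coeff β = 0 := by
  induction hy using Submodule.span_induction with
  | mem x hx =>
    obtain ⟨r, rfl⟩ := hx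
    exact Rpos.coeff_single_mul_of_le hβ _ _
  | zero => rfl
  | add a b _ _ ha hb => simp [ha, hb]
  | smul c a _ ha => simp [ha]

theorem single_mem_tIdeal {β : PosReal} (hβ : 1 < (β : ℝ)) (c : ℂ) : single β c ∈ tIdeal := by
  obtain ⟨γ, hγ⟩ := PosReal.exists_add_eq_of_lt (ε := ⟨1, one_pos⟩) hβ
  have : single β c = tElt * single γ c := by rw [tElt, single_mul_single, hγ, one_mul]
  exact this ▸ Submodule.subset_span ⟨_, rfl⟩

section Bar

variable (act : Rpos →ₗ[ℂ] Mqt →ₗ[ℂ] Mqt)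

theorem barDM_tmul (r s : Rpos) (m : Mqt) :
    barDM act (r ⊗ₜ (s ⊗ₜ m)) = (r * s) ⊗ₜ m - r ⊗ₜ act s m := by
  simp [barDM]

theorem mul_tmul_sub_tmul_mem_range_barDM (r s : Rpos) (m : Mqt) :
    (r * s) ⊗ₜ m - r ⊗ₜ act s m ∈ range (barDM act) :=
  ⟨_, barDM_tmul act r s m⟩

theorem eventually_exists_sub_single_tmul_mem_range_barDM (x : Rpos ⊗[ℂ] Mqt) :
    ∀ᶠ ε : PosReal in Filter.atBot, ∃ m : Mqt, x - single ε 1 ⊗ₜ m ∈ range (barDM act) := by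
  have h_zero : ∀ᶠ ε : PosReal in Filter.atBot,
      ∃ m : Mqt, (0 : Rpos ⊗[ℂ] Mqt) - single ε 1 ⊗ₜ m ∈ range (barDM act) :=
    .of_forall fun _ => ⟨0, by simp⟩
  have h_add {x y : Rpos ⊗[ℂ] Mqt}
      (hx : ∀ᶠ ε : PosReal in Filter.atBot, ∃ m, x - single ε 1 ⊗ₜ m ∈ range (barDM act))
      (hy : ∀ᶠ ε : PosReal in Filter.atBot, ∃ m, y - single ε 1 ⊗ₜ m ∈ range (barDM act)) :
      ∀ᶠ ε : PosReal in Filter.atBot, ∃ m, x + y - single ε 1 ⊗ₜ m ∈ range (barDM act) := by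
    filter_upwards [hx, hy] with ε ⟨m, hm⟩ ⟨n, hn⟩
    refine ⟨m + n, ?_⟩
    convert add_mem hm hn using 1
    rw [tmul_add]
    abel
  induction x using TensorProduct.induction_on with
  | zero => exact h_zero
  | add x y hx hy => exact h_add hx hy
  | tmul r m =>
    induction r using AddMonoidAlgebra.induction_linear with
    | zero => simpa using h_zero
    | add r s hr hs => simpa [add_tmul] using h_add hr hs
    | single α c =>
      filter_upwards [Filter.eventually_lt_atBot α] with ε hε
      obtain ⟨γ, rfl⟩ := PosReal.exists_add_eq_of_lt hε
      refine ⟨act (single γ c) m, ?_⟩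
      simpa [single_mul_single] using
        mul_tmul_sub_tmul_mem_range_barDM act (single ε 1) (single γ c) m

variable {act} (hact : ∀ (r x : Rpos), act r (tIdeal.mkQ x) = tIdeal.mkQ (r * x))
include hact

theorem act_mul (r s : Rpos) (m : Mqt) : act (r * s) m = act r (act s m) := by
  obtain ⟨x, rfl⟩ := tIdeal.mkQ_surjective m
  rw [hact, hact, hact, mul_assoc]

theorem range_barDM_le_ker_lift : range (barDM act) ≤ ker (lift act) := by
  rintro _ ⟨x, rfl⟩
  induction x using TensorProduct.induction_on with
  | zero => simp
  | add x y hx hy => rw [map_add]; exact add_mem hx hy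
  | tmul r y =>
    induction y using TensorProduct.induction_on with
    | zero => simp
    | add y z hy hz => rw [tmul_add, map_add]; exact add_mem hy hz
    | tmul s m => simp [barDM_tmul, act_mul hact]

theorem single_tmul_mkQ_single_mem_range_barDM {ε α : PosReal} (h : 1 < (ε : ℝ) + α) (c : ℂ) :
    single ε 1 ⊗ₜ tIdeal.mkQ (single α c) ∈ range (barDM act) := by
  obtain ⟨δ, hδε, hδα⟩ : ∃ δ : PosReal, δ < ε ∧ 1 < (δ : ℝ) + α := by
    obtain ⟨δ, hδ, hδε⟩ := exists_between (max_lt ε.2 (by linarith) : max 0 (1 - (α : ℝ)) < ε)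
    exact ⟨⟨δ, (le_max_left _ _).trans_lt hδ⟩, hδε, by linarith [le_max_right 0 (1 - (α : ℝ))]⟩
  obtain ⟨γ, rfl⟩ := PosReal.exists_add_eq_of_lt hδε
  have h_zero : tIdeal.mkQ (single (δ + α) c) = 0 :=
    (Submodule.Quotient.mk_eq_zero _).2 (single_mem_tIdeal hδα c)
  have := mul_tmul_sub_tmul_mem_range_barDM act (single γ 1) (single δ 1) (tIdeal.mkQ (single α c))
  rwa [hact, single_mul_single, single_mul_single, one_mul, one_mul, add_comm γ, h_zero,
    tmul_zero, sub_zero] at this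

theorem single_tmul_mem_range_barDM_of_act_eq_zero {ε : PosReal} {m : Mqt}
    (h : act (single ε 1) m = 0) : single ε 1 ⊗ₜ m ∈ range (barDM act) := by
  obtain ⟨y, rfl⟩ := tIdeal.mkQ_surjective m
  have hy : single ε 1 * y ∈ tIdeal := by
    rwa [hact, Submodule.mkQ_apply, Submodule.Quotient.mk_eq_zero] at h
  rw [← sum_coeff_single y, map_finsuppSum, Finsupp.sum, tmul_sum]
  refine Submodule.sum_mem _ fun α _ => ?_
  by_cases hα : 1 < (ε : ℝ) + α
  · exact single_tmul_mkQ_single_mem_range_barDM hact hα _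
  · have : y.coeff α = 0 := by
      rw [← one_mul (y.coeff α), ← Rpos.coeff_single_mul_add]
      exact coeff_eq_zero_of_mem_tIdeal hy (by push_cast; linarith)
    simp [this]

theorem ker_lift_eq_range_barDM : ker (lift act) = range (barDM act) := by
  refine le_antisymm (fun x hx => ?_) (range_barDM_le_ker_lift hact)
  obtain ⟨ε, m, hm⟩ := (eventually_exists_sub_single_tmul_mem_range_barDM act x).exists
  have h_act : act (single ε 1) m = 0 := by
    simpa [mem_ker.1 hx] using range_barDM_le_ker_lift hact hm
  simpa using add_mem hm (single_tmul_mem_range_barDM_of_act_eq_zero hact h_act)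

theorem lift_surjective : Surjective (lift act) := by
  intro m
  obtain ⟨y, rfl⟩ := tIdeal.mkQ_surjective m
  suffices y ∈ (range (lift act)).comap tIdeal.mkQ from this
  induction y using AddMonoidAlgebra.induction_linear with
  | zero => exact zero_mem _
  | add y z hy hz => exact add_mem hy hz
  | single α c =>
    obtain ⟨ε, hε⟩ := exists_lt α
    obtain ⟨γ, rfl⟩ := PosReal.exists_add_eq_of_lt hε
    refine ⟨single ε c ⊗ₜ tIdeal.mkQ (single γ 1), ?_⟩
    rw [lift.tmul, hact, single_mul_single, mul_one]

end Bar

/-- `M = R/tR` is a smooth module over `R = ℂ[t^α | 0 < α ∈ ℝ]`: the canonical map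
`R ⊗_R M → M` is an isomorphism.  Here `act` is the quotient action of `R` on `M`. -/
theorem quotient_by_t_smooth (act : Rpos →ₗ[ℂ] Mqt →ₗ[ℂ] Mqt)
    (hact : ∀ (r x : Rpos), act r (tIdeal.mkQ x) = tIdeal.mkQ (r * x)) :
    ∀ f : ((Rpos ⊗[ℂ] Mqt) ⧸ LinearMap.range (barDM act)) →ₗ[ℂ] Mqt,
      f ∘ₗ (LinearMap.range (barDM act)).mkQ = TensorProduct.lift act →
      Function.Bijective f :=
  fun _ hf => Submodule.bijective_of_comp_mkQ_eq hf (ker_lift_eq_range_barDM hact)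
    (lift_surjective hact)
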